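/- Let U, V be subspaces of ℝ^n with Friedrichs cosine c_F = ‖P_V P_U − P_{U∩V}‖ < 1, and let C_T denote the circumcenter operator C_T(x) = P_{aff{x, R_U x, R_V R_U x}}(P_{U∩V}(x)). Then for any x ∈ U + V and all k ∈ ℕ, ‖C_T^k(x) − P_{U∩V}(x)‖ ≤ c_F^k · ‖x − P_{U∩V}(x)‖; in particular the circumcentered Douglas–Rachford iterates converge linearly to P_{U∩V}(x). -/

import Mathlib

/-!
The Douglas–Rachford point `T x = (x + R_V R_U x) / 2` lies in the affine hull of `x`, `R_U x`,
`R_V R_U x`, and the circumcenter is the point of that hull nearest to `P_{U ⊓ V} x`; so it is at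
least as close to `P_{U ⊓ V} x` as `T x`. Since `T` is linear and fixes `U ⊓ V`, this reduces the
step to `‖T y‖ ≤ c_F ‖y‖` for `y ∈ (U ⊔ V) ⊓ (U ⊓ V)ᗮ`. There
`T y = P_V (P_U y) + P_{Vᗮ} (P_{Uᗮ} y)` is an orthogonal sum, the first summand contracts by
`c_F` by definition and the second because `Uᗮ, Vᗮ` satisfy the same Friedrichs bound on `U ⊔ V`.
The hull lies in `U ⊔ V` and in `x + (U ⊓ V)ᗮ`, so every iterate stays in `U ⊔ V` with the same
projection onto `U ⊓ V`, and the one-step bound iterates.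
-/

open Submodule
open scoped RealInnerProductSpace

theorem sq_sub_sq_le_of_sq_le_mul {t q s c : ℝ} (ht : 0 ≤ t) (hs : 0 ≤ s) (hc : 0 ≤ c)
    (htqs : t ^ 2 ≤ q * s) (hqt : q ≤ c * t) (hts : t ^ 2 ≤ s ^ 2) :
    t ^ 2 - q ^ 2 ≤ c ^ 2 * (s ^ 2 - t ^ 2) := by
  have htcs : t ≤ c * s := by
    rcases ht.eq_or_lt with rfl | ht0
    · positivity
    · nlinarith
  rcases hs.eq_or_lt with rfl | hs0
  · nlinarith
  have : s ^ 2 * (t ^ 2 - q ^ 2) ≤ s ^ 2 * (c ^ 2 * (s ^ 2 - t ^ 2)) := by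
    nlinarith [mul_le_mul htcs htcs ht (by positivity)]
  exact le_of_mul_le_mul_left this (by positivity)

theorem norm_iterate_sub_le_pow_mul {F : Type*} [SeminormedAddGroup F] {f g : F → F} {S : Set F}
    {c : ℝ} (hc : 0 ≤ c) (hfS : Set.MapsTo f S S) (hgf : ∀ y ∈ S, g (f y) = g y)
    (hf : ∀ y ∈ S, ‖f y - g y‖ ≤ c * ‖y - g y‖) {x : F} (hx : x ∈ S) (k : ℕ) :
    ‖f^[k] x - g x‖ ≤ c ^ k * ‖x - g x‖ := by
  have hS (k : ℕ) : f^[k] x ∈ S := hfS.iterate k hx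
  have hg (k : ℕ) : g (f^[k] x) = g x := by
    induction k with
    | zero => rfl
    | succ k ih => rw [Function.iterate_succ_apply', hgf _ (hS k), ih]
  induction k with
  | zero => simp
  | succ k ih =>
    calc ‖f^[k + 1] x - g x‖ = ‖f (f^[k] x) - g (f^[k] x)‖ := by
          rw [Function.iterate_succ_apply', hg]
      _ ≤ c * ‖f^[k] x - g (f^[k] x)‖ := hf _ (hS k)
      _ ≤ c * (c ^ k * ‖x - g x‖) := by rw [hg]; exact mul_le_mul_of_nonneg_left ih hc
      _ = c ^ (k + 1) * ‖x - g x‖ := by ring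

variable {E : Type*} [NormedAddCommGroup E] [InnerProductSpace ℝ E]

namespace Submodule

variable {K : Submodule ℝ E} [K.HasOrthogonalProjection]

variable (K) in
theorem reflection_sub_self_mem_orthogonal (w : E) : K.reflection w - w ∈ Kᗮ := by
  have h := K.sub_starProjection_mem_orthogonal w
  rw [reflection_apply, two_smul]
  convert Kᗮ.neg_mem (Kᗮ.add_mem h h) using 1
  abel

theorem reflection_mem_of_le {W : Submodule ℝ E} (hKW : K ≤ W) {w : E} (hw : w ∈ W) :
    K.reflection w ∈ W := by
  have h := hKW (K.starProjection_apply_mem w)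
  rw [reflection_apply, two_smul]
  exact W.sub_mem (W.add_mem h h) hw

end Submodule

theorem exists_mem_orthogonal_inf_add_eq {U V : Submodule ℝ E} [(U ⊓ V).HasOrthogonalProjection]
    {b : E} (hb : b ∈ U ⊔ V) : ∃ u ∈ U, u ∈ (U ⊓ V)ᗮ ∧ ∃ v ∈ V, u + v = b := by
  obtain ⟨u, hu, v, hv, rfl⟩ := mem_sup.1 hb
  have hm := (U ⊓ V).starProjection_apply_mem u
  refine ⟨u - (U ⊓ V).starProjection u, U.sub_mem hu hm.1, sub_starProjection_mem_orthogonal u,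
    v + (U ⊓ V).starProjection u, V.add_mem hv hm.2, by abel⟩

section DouglasRachford

variable (U V : Submodule ℝ E) [U.HasOrthogonalProjection] [V.HasOrthogonalProjection]

noncomputable def douglasRachford (x : E) : E := midpoint ℝ x (V.reflection (U.reflection x))

theorem douglasRachford_eq (x : E) :
    douglasRachford U V x =
      V.starProjection (U.starProjection x) + Vᗮ.starProjection (Uᗮ.starProjection x) := by
  simp only [douglasRachford, midpoint_eq_smul_add, reflection_apply, starProjection_orthogonal_val,
    map_sub, map_nsmul, invOf_eq_inv]
  module

theorem douglasRachford_sub_of_mem_inf {p : E} (hp : p ∈ U ⊓ V) (x : E) :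
    douglasRachford U V x - p = douglasRachford U V (x - p) := by
  have hRp : V.reflection (U.reflection p) = p := by
    rw [reflection_mem_subspace_eq_self hp.1, reflection_mem_subspace_eq_self hp.2]
  rw [douglasRachford, douglasRachford, map_sub, map_sub, hRp]
  simp only [midpoint_eq_smul_add, invOf_eq_inv]
  module

theorem affineSpan_reflections_le_mk' {W : Submodule ℝ E} {x : E} (hU : U.reflection x - x ∈ W)
    (hV : V.reflection (U.reflection x) - U.reflection x ∈ W) :
    affineSpan ℝ {x, U.reflection x, V.reflection (U.reflection x)} ≤ AffineSubspace.mk' x W := by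
  rw [affineSpan_le]
  rintro z (rfl | rfl | rfl) <;> rw [SetLike.mem_coe, AffineSubspace.mem_mk', vsub_eq_sub]
  · simp
  · exact hU
  · simpa using W.add_mem hV hU

variable [(U ⊓ V).HasOrthogonalProjection]

noncomputable def friedrichsCos : ℝ := ‖V.starProjection ∘L U.starProjection - (U ⊓ V).starProjection‖

theorem friedrichsCos_nonneg : 0 ≤ friedrichsCos U V := norm_nonneg _

-- The circumcenter of `x, R_U x, R_V R_U x`, as the projection of `P_{U ⊓ V} x` onto their
-- affine hull.
noncomputable def circumcenteredDR (x : E) : E :=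
  EuclideanGeometry.orthogonalProjection
    (affineSpan ℝ {x, U.reflection x, V.reflection (U.reflection x)}) ((U ⊓ V).starProjection x)

variable {U V}

theorem norm_starProjection_le_friedrichsCos_mul {a : E} (haU : a ∈ U) (ha : a ∈ (U ⊓ V)ᗮ) :
    ‖V.starProjection a‖ ≤ friedrichsCos U V * ‖a‖ := by
  have h : (V.starProjection ∘L U.starProjection - (U ⊓ V).starProjection) a = V.starProjection a := by
    simp [starProjection_eq_self_iff.2 haU, (starProjection_apply_eq_zero_iff _).2 ha]
  exact h ▸ ContinuousLinearMap.le_opNorm _ a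

-- Write `b = u + v` with `u ∈ U ⊓ (U ⊓ V)ᗮ`, `v ∈ V`. Then `b ⊥ u` gives `‖u‖² ≤ ‖P_V u‖ ‖v‖`,
-- while `‖b‖² = ‖v‖² - ‖u‖²` and `‖P_{Vᗮ} b‖² = ‖u‖² - ‖P_V u‖²`.
theorem norm_starProjection_orthogonal_le_friedrichsCos_mul {b : E} (hbU : b ∈ Uᗮ)
    (hb : b ∈ U ⊔ V) : ‖Vᗮ.starProjection b‖ ≤ friedrichsCos U V * ‖b‖ := by
  obtain ⟨u, hu, hu', v, hv, rfl⟩ := exists_mem_orthogonal_inf_add_eq hb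
  have hPv : V.starProjection v = v := starProjection_eq_self_iff.2 hv
  have huv : ⟪u, v⟫ = -‖u‖ ^ 2 := by
    have h := inner_right_of_mem_orthogonal hu hbU
    rw [inner_add_right, real_inner_self_eq_norm_sq] at h
    linarith
  have hinner : ‖u‖ ^ 2 ≤ ‖V.starProjection u‖ * ‖v‖ := by
    have h : ⟪V.starProjection u, v⟫ = -‖u‖ ^ 2 := by
      rw [inner_starProjection_left_eq_right, hPv, huv]
    linarith [neg_le_abs ⟪V.starProjection u, v⟫, abs_real_inner_le_norm (V.starProjection u) v]
  have hb2 : ‖u + v‖ ^ 2 = ‖v‖ ^ 2 - ‖u‖ ^ 2 := by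
    rw [norm_add_sq_real, huv]; ring
  have hPb2 : ‖Vᗮ.starProjection (u + v)‖ ^ 2 = ‖u‖ ^ 2 - ‖V.starProjection u‖ ^ 2 := by
    have hPb : Vᗮ.starProjection (u + v) = Vᗮ.starProjection u := by
      rw [map_add, (starProjection_apply_eq_zero_iff _).2 (V.le_orthogonal_orthogonal hv), add_zero]
    rw [hPb, V.norm_sq_eq_add_norm_sq_starProjection u]
    ring
  have hQ := sq_sub_sq_le_of_sq_le_mul (norm_nonneg u) (norm_nonneg v) (friedrichsCos_nonneg U V)
    hinner (norm_starProjection_le_friedrichsCos_mul hu hu')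
    (by nlinarith [sq_nonneg ‖u + v‖])
  refine le_of_pow_le_pow_left₀ two_ne_zero (mul_nonneg (friedrichsCos_nonneg U V) (norm_nonneg _)) ?_
  rw [hPb2, mul_pow, hb2]
  exact hQ

theorem norm_douglasRachford_le {y : E} (hy : y ∈ U ⊔ V) (hy' : y ∈ (U ⊓ V)ᗮ) :
    ‖douglasRachford U V y‖ ≤ friedrichsCos U V * ‖y‖ := by
  set a := U.starProjection y
  set b := Uᗮ.starProjection y
  have haU : a ∈ U := U.starProjection_apply_mem y
  have hbU : b ∈ Uᗮ := Uᗮ.starProjection_apply_mem y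
  have hba : b = y - a := starProjection_orthogonal_val y
  have hb : b ∈ U ⊔ V := hba ▸ (U ⊔ V).sub_mem hy (mem_sup_left haU)
  have ha : a ∈ (U ⊓ V)ᗮ := by
    simpa [hba] using (U ⊓ V)ᗮ.sub_mem hy' (orthogonal_le inf_le_left hbU)
  have hy2 : ‖y‖ ^ 2 = ‖a‖ ^ 2 + ‖b‖ ^ 2 := U.norm_sq_eq_add_norm_sq_starProjection y
  have hTy2 : ‖douglasRachford U V y‖ ^ 2 =
      ‖V.starProjection a‖ ^ 2 + ‖Vᗮ.starProjection b‖ ^ 2 := by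
    rw [douglasRachford_eq, norm_add_sq_real, inner_right_of_mem_orthogonal
      (V.starProjection_apply_mem a) (Vᗮ.starProjection_apply_mem b)]
    ring
  have hPa := norm_starProjection_le_friedrichsCos_mul haU ha
  have hPb := norm_starProjection_orthogonal_le_friedrichsCos_mul hbU hb
  have hc := friedrichsCos_nonneg U V
  refine le_of_pow_le_pow_left₀ two_ne_zero (by positivity) ?_
  calc ‖douglasRachford U V y‖ ^ 2
      _ ≤ (friedrichsCos U V * ‖a‖) ^ 2 + (friedrichsCos U V * ‖b‖) ^ 2 := by
        rw [hTy2]; gcongr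
      _ = (friedrichsCos U V * ‖y‖) ^ 2 := by rw [mul_pow _ ‖y‖, hy2]; ring

theorem circumcenteredDR_sub_self_mem {W : Submodule ℝ E} {x : E} (hU : U.reflection x - x ∈ W)
    (hV : V.reflection (U.reflection x) - U.reflection x ∈ W) : circumcenteredDR U V x - x ∈ W :=
  AffineSubspace.mem_mk'.1 <|
    affineSpan_reflections_le_mk' U V hU hV (EuclideanGeometry.orthogonalProjection_mem _)

theorem circumcenteredDR_mem_sup {x : E} (hx : x ∈ U ⊔ V) : circumcenteredDR U V x ∈ U ⊔ V := by
  have hRx := reflection_mem_of_le le_sup_left hx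
  have h := circumcenteredDR_sub_self_mem ((U ⊔ V).sub_mem hRx hx)
    ((U ⊔ V).sub_mem (reflection_mem_of_le le_sup_right hRx) hRx)
  simpa using (U ⊔ V).add_mem h hx

theorem starProjection_inf_circumcenteredDR (x : E) :
    (U ⊓ V).starProjection (circumcenteredDR U V x) = (U ⊓ V).starProjection x := by
  have h := circumcenteredDR_sub_self_mem
    (orthogonal_le inf_le_left (U.reflection_sub_self_mem_orthogonal x))
    (orthogonal_le inf_le_right (V.reflection_sub_self_mem_orthogonal (U.reflection x)))
  rw [← sub_eq_zero, ← map_sub]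
  exact (starProjection_apply_eq_zero_iff _).2 h

theorem norm_circumcenteredDR_sub_le {x : E} (hx : x ∈ U ⊔ V) :
    ‖circumcenteredDR U V x - (U ⊓ V).starProjection x‖ ≤
      friedrichsCos U V * ‖x - (U ⊓ V).starProjection x‖ := by
  set p := (U ⊓ V).starProjection x
  set A := affineSpan ℝ {x, U.reflection x, V.reflection (U.reflection x)}
  have hp : p ∈ U ⊓ V := starProjection_apply_mem _ x
  have hTA : douglasRachford U V x ∈ A :=
    AffineMap.lineMap_mem _ (subset_affineSpan _ _ (by simp)) (subset_affineSpan _ _ (by simp))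
  calc ‖circumcenteredDR U V x - p‖ = Metric.infDist p A := by
        rw [← EuclideanGeometry.dist_orthogonalProjection_eq_infDist, dist_comm, dist_eq_norm]
        rfl
    _ ≤ ‖douglasRachford U V x - p‖ := by
        rw [← dist_eq_norm, dist_comm]
        exact Metric.infDist_le_dist_of_mem hTA
    _ = ‖douglasRachford U V (x - p)‖ := by rw [douglasRachford_sub_of_mem_inf U V hp]
    _ ≤ friedrichsCos U V * ‖x - p‖ :=
        norm_douglasRachford_le ((U ⊔ V).sub_mem hx (mem_sup_left hp.1))
          (sub_starProjection_mem_orthogonal x)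

end DouglasRachford

theorem CDRM_linear_convergence_general (n : ℕ) (U V : Submodule ℝ (EuclideanSpace ℝ (Fin n)))
    (cF : ℝ)
    (hcF : cF = ‖(V.subtypeL ∘L Submodule.orthogonalProjection V) ∘L
        (U.subtypeL ∘L Submodule.orthogonalProjection U) -
        ((U ⊓ V).subtypeL ∘L Submodule.orthogonalProjection (U ⊓ V))‖)
    (RU RV CT : EuclideanSpace ℝ (Fin n) → EuclideanSpace ℝ (Fin n))
    (hRU : ∀ w, RU w = 2 • (Submodule.orthogonalProjection U w : EuclideanSpace ℝ (Fin n)) - w)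
    (hRV : ∀ w, RV w = 2 • (Submodule.orthogonalProjection V w : EuclideanSpace ℝ (Fin n)) - w)
    (hCT : ∀ w, CT w =
      (EuclideanGeometry.orthogonalProjection (affineSpan ℝ {w, RU w, RV (RU w)})
        ((Submodule.orthogonalProjection (U ⊓ V) w : EuclideanSpace ℝ (Fin n))) :
        EuclideanSpace ℝ (Fin n)))
    (x : EuclideanSpace ℝ (Fin n)) (hx : x ∈ U ⊔ V) (k : ℕ) :
    ‖CT^[k] x - (Submodule.orthogonalProjection (U ⊓ V) x : EuclideanSpace ℝ (Fin n))‖ ≤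
      cF ^ k * ‖x - (Submodule.orthogonalProjection (U ⊓ V) x : EuclideanSpace ℝ (Fin n))‖ := by
  obtain rfl : RU = U.reflection := funext fun w => (hRU w).trans (U.reflection_apply w).symm
  obtain rfl : RV = V.reflection := funext fun w => (hRV w).trans (V.reflection_apply w).symm
  obtain rfl : CT = circumcenteredDR U V := funext hCT
  obtain rfl : cF = friedrichsCos U V := hcF
  exact norm_iterate_sub_le_pow_mul (g := (U ⊓ V).starProjection) (friedrichsCos_nonneg U V)
    (fun _ => circumcenteredDR_mem_sup) (fun y _ => starProjection_inf_circumcenteredDR y)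
    (fun _ => norm_circumcenteredDR_sub_le) hx k

/-- Linear convergence of the Circumcentered–Douglas–Rachford method: if
`c_F = ‖P_V P_U - P_{U∩V}‖ < 1` is the cosine of the Friedrichs angle and `C_T` is the
circumcenter operator `C_T x = P_{aff{x, R_U x, R_V R_U x}}(P_{U∩V} x)`, then for any
`x ∈ U + V` and all `k`, `‖C_T^[k] x - P_{U∩V} x‖ ≤ c_F ^ k * ‖x - P_{U∩V} x‖`. -/
theorem CDRM_linear_convergence (n : ℕ) (U V : Submodule ℝ (EuclideanSpace ℝ (Fin n)))
    (cF : ℝ)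
    (hcF : cF = ‖(V.subtypeL ∘L Submodule.orthogonalProjection V) ∘L
        (U.subtypeL ∘L Submodule.orthogonalProjection U) -
        ((U ⊓ V).subtypeL ∘L Submodule.orthogonalProjection (U ⊓ V))‖)
    (hcF1 : cF < 1)
    (RU RV CT : EuclideanSpace ℝ (Fin n) → EuclideanSpace ℝ (Fin n))
    (hRU : ∀ w, RU w = 2 • (Submodule.orthogonalProjection U w : EuclideanSpace ℝ (Fin n)) - w)
    (hRV : ∀ w, RV w = 2 • (Submodule.orthogonalProjection V w : EuclideanSpace ℝ (Fin n)) - w)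
    (hCT : ∀ w, CT w =
      (EuclideanGeometry.orthogonalProjection (affineSpan ℝ {w, RU w, RV (RU w)})
        ((Submodule.orthogonalProjection (U ⊓ V) w : EuclideanSpace ℝ (Fin n))) :
        EuclideanSpace ℝ (Fin n)))
    (x : EuclideanSpace ℝ (Fin n)) (hx : x ∈ U ⊔ V) (k : ℕ) :
    ‖CT^[k] x - (Submodule.orthogonalProjection (U ⊓ V) x : EuclideanSpace ℝ (Fin n))‖ ≤
      cF ^ k * ‖x - (Submodule.orthogonalProjection (U ⊓ V) x : EuclideanSpace ℝ (Fin n))‖ :=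
  CDRM_linear_convergence_general n U V cF hcF RU RV CT hRU hRV hCT x hx k
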